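/- Let G be a digraph with a global sink and let ρ be an acyclic rotor configuration on G. If chip configurations σ₁ and σ₂ are equivalent modulo the integer row span of the reduced Laplacian Δ'(G), then σ₁(ρ) = σ₂(ρ). -/

import Mathlib

/-!
Record a run of rotor-routing by its odometer `c` (how often each vertex fires): the final rotor
at `v` is `next^[c v] (ρ v)`, and the final chips are `σ` plus the net flow of `c`. Adding a
multiple `q v` of the out-degree to `c v` leaves the final rotors unchanged and subtracts
`q ᵥ* Δ'` from the net flow, so `σ₁ - σ₂ = n ᵥ* Δ'` lets us shift the two odometers to `A` and
`B` with equal net flows and the same final rotors as the two runs.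

Suppose `B v < A v` on a nonempty set `S`. Summed over `S`, the equality of net flows says that
the extra firings `B v + 1, …, A v` of the vertices `v ∈ S` send at least `∑ v ∈ S, (A v - B v)`
chips into `S` (vertices outside `S` only lower the count), that is, every one of them does. The
last such chip of `v` travels along its final rotor, so the final rotors on `S` all point into
`S` and close a rotor cycle. But final rotors are acyclic, since rotor-routing preserves the
invariant that every rotor cycle passes through a vertex holding a chip. Hence `A = B`.
-/

/-- The out-degree of a vertex. -/
def outdeg {V E : Type} [Fintype E] [DecidableEq V] (tail : E → V) (v : V) : ℕ :=
  (Finset.univ.filter (fun e => tail e = v)).card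

/-- The number of edges from `v` to `w`. -/
def numEdges {V E : Type} [Fintype E] [DecidableEq V] (tail head : E → V) (v w : V) : ℕ :=
  (Finset.univ.filter (fun e => tail e = v ∧ head e = w)).card

/-- The vertices other than the (global) sink `s`. -/
abbrev Vne {V : Type} (s : V) : Type := {v : V // v ≠ s}

/-- The reduced Laplacian of the digraph. -/
def reducedLaplacian {V E : Type} [Fintype E] [DecidableEq V] (tail head : E → V)
    (s : V) : Matrix (Vne s) (Vne s) ℤ :=
  fun i j => (if i = j then (outdeg tail i.1 : ℤ) else 0) - (numEdges tail head i.1 j.1 : ℤ)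

/-- The integer row span of the reduced Laplacian. -/
def rowSpan {V E : Type} [Fintype E] [DecidableEq V] (tail head : E → V) (s : V) :
    Submodule ℤ (Vne s → ℤ) :=
  Submodule.span ℤ (Set.range (fun i => reducedLaplacian tail head s i))

/-- Rotor configurations on the non-sink vertices. -/
abbrev RotorConfig {V E : Type} (tail : E → V) (s : V) : Type :=
  {ρ : Vne s → E // ∀ v, tail (ρ v) = v.1}

/-- A chip-and-rotor state. -/
abbrev CRState {V E : Type} (tail : E → V) (s : V) : Type :=
  (Vne s → ℕ) × RotorConfig tail s

/-- Firing the non-sink vertex `v` in a chip-and-rotor state: the rotor at `v` advances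
to the next edge and one chip moves from `v` along it (disappearing at the sink). -/
def crFire {V E : Type} [DecidableEq V] {s : V} (tail head : E → V) (next : E → E)
    (hnext : ∀ e, tail (next e) = tail e)
    (τ : CRState tail s) (v : Vne s) : CRState tail s :=
  (fun u => (τ.1 u - if u = v then 1 else 0) +
      if u.1 = head (next (τ.2.1 v)) then 1 else 0,
   ⟨Function.update τ.2.1 v (next (τ.2.1 v)), by
      intro u
      rcases eq_or_ne u v with h | h
      · rw [h, Function.update_self, hnext]
        exact τ.2.2 v
      · rw [Function.update_of_ne h]
        exact τ.2.2 u⟩)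

/-- A non-sink vertex is active when it holds a chip. -/
def crActive {V E : Type} {s : V} (tail : E → V) (τ : CRState tail s) (v : Vne s) : Prop :=
  1 ≤ τ.1 v

/-- The result of firing the vertices in the list `l` in order. -/
def crFireList {V E : Type} [DecidableEq V] {s : V} (tail head : E → V) (next : E → E)
    (hnext : ∀ e, tail (next e) = tail e)
    (τ : CRState tail s) : List (Vne s) → CRState tail s
  | [] => τ
  | v :: l => crFireList tail head next hnext (crFire tail head next hnext τ v) l

/-- The firing sequence `l` is legal from `τ`. -/
def crLegal {V E : Type} [DecidableEq V] {s : V} (tail head : E → V) (next : E → E)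
    (hnext : ∀ e, tail (next e) = tail e)
    (τ : CRState tail s) : List (Vne s) → Prop
  | [] => True
  | v :: l => crActive tail τ v ∧ crLegal tail head next hnext (crFire tail head next hnext τ v) l

/-- `σ(ρ) = ρ'`: starting with chips `σ` and rotors `ρ`, all chips can be routed to
the sink by a legal firing sequence, leaving the rotor configuration `ρ'`. -/
def RoutesAll {V E : Type} [DecidableEq V] {s : V} (tail head : E → V) (next : E → E)
    (hnext : ∀ e, tail (next e) = tail e)
    (σ : Vne s → ℕ) (ρ ρ' : RotorConfig tail s) : Prop :=
  ∃ l : List (Vne s), crLegal tail head next hnext (σ, ρ) l ∧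
    (∀ v, (crFireList tail head next hnext (σ, ρ) l).1 v = 0) ∧
    (crFireList tail head next hnext (σ, ρ) l).2 = ρ'

/-- The vertex-successor map of a rotor configuration (fixing the sink). -/
def rotorSucc {V E : Type} [DecidableEq V] (tail head : E → V) (s : V)
    (ρ : RotorConfig tail s) : V → V :=
  fun u => if h : u = s then u else head (ρ.1 ⟨u, h⟩)

/-- A rotor configuration is acyclic when its edges contain no directed cycle. -/
def RAcyclic {V E : Type} [DecidableEq V] (tail head : E → V) (s : V)
    (ρ : RotorConfig tail s) : Prop :=
  ∀ (v : Vne s) (k : ℕ), 0 < k → (rotorSucc tail head s ρ)^[k] v.1 ≠ v.1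


open Finset Function
open scoped Matrix

section RotorCycle

variable {V E : Type} {tail : E → V} {next : E → E}

theorem tail_iterate_next (hnext : ∀ e, tail (next e) = tail e) (k : ℕ) (e : E) :
    tail (next^[k] e) = tail e := by
  induction k with
  | zero => rfl
  | succ k ih => rw [iterate_succ_apply', hnext, ih]

theorem minimalPeriod_next_pos (hnext : ∀ e, tail (next e) = tail e)
    (hcyc : ∀ e e' : E, tail e = tail e' → ∃ k, next^[k] e = e') (e : E) :
    0 < minimalPeriod next e := by
  obtain ⟨m, hm⟩ := hcyc (next e) e (hnext e)
  exact IsPeriodicPt.minimalPeriod_pos m.succ_pos ((iterate_succ_apply next m e).trans hm)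

variable [Fintype E] [DecidableEq V]

theorem sum_range_minimalPeriod_next (hnext : ∀ e, tail (next e) = tail e)
    (hcyc : ∀ e e' : E, tail e = tail e' → ∃ k, next^[k] e = e')
    {M : Type} [AddCommMonoid M] (f : E → M) (e : E) :
    ∑ j ∈ range (minimalPeriod next e), f (next^[j] e) = ∑ e' with tail e' = tail e, f e' := by
  refine sum_nbij (next^[·] e) (fun j _ => ?_) ?_ (fun e' he' => ?_) (fun _ _ => rfl)
  · simpa using tail_iterate_next hnext j e
  · simpa [Set.InjOn] using iterate_injOn_Iio_minimalPeriod (f := next) (x := e)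
  · obtain ⟨k, rfl⟩ := hcyc e e' (mem_filter.1 he').2.symm
    exact ⟨k % minimalPeriod next e,
      mem_coe.2 (mem_range.2 (Nat.mod_lt _ (minimalPeriod_next_pos hnext hcyc e))),
      iterate_mod_minimalPeriod_eq⟩

theorem minimalPeriod_next_eq_outdeg (hnext : ∀ e, tail (next e) = tail e)
    (hcyc : ∀ e e' : E, tail e = tail e' → ∃ k, next^[k] e = e') (e : E) :
    minimalPeriod next e = outdeg tail (tail e) := by
  have := sum_range_minimalPeriod_next hnext hcyc (fun _ => 1) e
  rwa [← card_eq_sum_ones, ← card_eq_sum_ones, card_range] at this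

theorem iterate_add_mul_outdeg (hnext : ∀ e, tail (next e) = tail e)
    (hcyc : ∀ e e' : E, tail e = tail e' → ∃ k, next^[k] e = e') (e : E) (k q : ℕ) :
    next^[k + q * outdeg tail (tail e)] e = next^[k] e := by
  rw [← minimalPeriod_next_eq_outdeg hnext hcyc, ← iterate_mod_minimalPeriod_eq,
    Nat.add_mul_mod_self_right, iterate_mod_minimalPeriod_eq]

theorem sum_range_outdeg_head_eq (hnext : ∀ e, tail (next e) = tail e)
    (hcyc : ∀ e e' : E, tail e = tail e' → ∃ k, next^[k] e = e') (head : E → V) (e : E) (w : V) :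
    ∑ j ∈ range (outdeg tail (tail e)), (if head (next^[j] e) = w then 1 else 0 : ℤ) =
      numEdges tail head (tail e) w := by
  rw [← minimalPeriod_next_eq_outdeg hnext hcyc,
    sum_range_minimalPeriod_next hnext hcyc (fun e' => if head e' = w then (1 : ℤ) else 0),
    sum_boole, filter_filter, numEdges]

end RotorCycle

section ChipsSent

variable {V E : Type} [DecidableEq V] (head : E → V) (next : E → E)

/-- The `j`-th firing (counting from 1) of a rotor starting at `e` advances it to `next^[j] e`
and sends its chip along that edge. -/
def chipsSent (e : E) (w : V) (k : ℕ) : ℤ :=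
  ∑ j ∈ range k, if head (next^[j + 1] e) = w then 1 else 0

theorem chipsSent_succ (e : E) (w : V) (k : ℕ) :
    chipsSent head next e w (k + 1) =
      (if head (next e) = w then 1 else 0) + chipsSent head next (next e) w k := by
  simp only [chipsSent, sum_range_succ' _ k, iterate_succ_apply, add_comm]
  rfl

theorem sum_chipsSent (T : Finset V) (e : E) (k : ℕ) :
    ∑ w ∈ T, chipsSent head next e w k =
      ∑ j ∈ range k, if head (next^[j + 1] e) ∈ T then 1 else 0 := by
  simp only [chipsSent]
  rw [sum_comm]
  exact sum_congr rfl fun j _ => sum_ite_eq _ _ _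

variable [Fintype E] {tail : E → V} {next}

theorem chipsSent_add_outdeg (hnext : ∀ e, tail (next e) = tail e)
    (hcyc : ∀ e e' : E, tail e = tail e' → ∃ k, next^[k] e = e') (e : E) (w : V) (k : ℕ) :
    chipsSent head next e w (k + outdeg tail (tail e)) =
      chipsSent head next e w k + numEdges tail head (tail e) w := by
  rw [chipsSent, sum_range_add, ← tail_iterate_next hnext (k + 1) e,
    ← sum_range_outdeg_head_eq hnext hcyc]
  congr 1
  refine sum_congr rfl fun j _ => ?_
  rw [← iterate_add_apply, add_comm j, add_right_comm]

theorem chipsSent_add_mul_outdeg (hnext : ∀ e, tail (next e) = tail e)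
    (hcyc : ∀ e e' : E, tail e = tail e' → ∃ k, next^[k] e = e') (e : E) (w : V) (k q : ℕ) :
    chipsSent head next e w (k + q * outdeg tail (tail e)) =
      chipsSent head next e w k + q * numEdges tail head (tail e) w := by
  induction q with
  | zero => simp
  | succ q ih =>
    rw [add_one_mul, ← add_assoc, chipsSent_add_outdeg head hnext hcyc, ih]
    push_cast
    ring

end ChipsSent

section NetFlow

variable {V E : Type} [Fintype V] [DecidableEq V] {tail : E → V} {s : V}
  (head : E → V) (next : E → E)

/-- The chips each non-sink vertex gains when every `v` fires `c v` times from the rotors `ρ`. -/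
def netFlow (ρ : RotorConfig tail s) (c : Vne s → ℕ) : Vne s → ℤ :=
  fun w => ∑ v, chipsSent head next (ρ.1 v) w.1 (c v) - c w

theorem netFlow_add_mul_outdeg [Fintype E] {next} (hnext : ∀ e, tail (next e) = tail e)
    (hcyc : ∀ e e' : E, tail e = tail e' → ∃ k, next^[k] e = e') (ρ : RotorConfig tail s)
    (c q : Vne s → ℕ) :
    netFlow head next ρ (fun v => c v + q v * outdeg tail v.1) =
      netFlow head next ρ c - (fun v => (q v : ℤ)) ᵥ* reducedLaplacian tail head s := by
  ext w
  have hsent (v : Vne s) :=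
    ρ.2 v ▸ chipsSent_add_mul_outdeg head hnext hcyc (ρ.1 v) w.1 (c v) (q v)
  simp only [netFlow, hsent, Pi.sub_apply, Matrix.vecMul, dotProduct, reducedLaplacian, mul_sub,
    mul_ite, mul_zero, sum_sub_distrib, sum_ite_eq', mem_univ, if_true, sum_add_distrib]
  push_cast
  ring

end NetFlow

theorem mem_rowSpan_iff {V E : Type} [Fintype V] [DecidableEq V] [Fintype E] (tail head : E → V)
    (s : V) (x : Vne s → ℤ) :
    x ∈ rowSpan tail head s ↔ ∃ n, n ᵥ* reducedLaplacian tail head s = x := by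
  change x ∈ Submodule.span ℤ (Set.range (reducedLaplacian tail head s).row) ↔ _
  rw [← range_vecMulLinear, LinearMap.mem_range]
  rfl

theorem List.count_cons_eq_ite {α : Type*} [BEq α] [LawfulBEq α] [DecidableEq α] (a b : α)
    (l : List α) : (b :: l).count a = l.count a + if a = b then 1 else 0 := by
  by_cases h : a = b
  · simp [h]
  · simp [h, Ne.symm h]

section Firing

variable {V E : Type} [DecidableEq V] {s : V} {tail head : E → V} {next : E → E}
  {hnext : ∀ e, tail (next e) = tail e}

theorem crFire_rotor (τ : CRState tail s) (v₀ v : Vne s) :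
    (crFire tail head next hnext τ v₀).2.1 v = next^[if v = v₀ then 1 else 0] (τ.2.1 v) := by
  rcases eq_or_ne v v₀ with rfl | h
  · simp [crFire]
  · simp [crFire, h]

theorem crFireList_rotor (τ : CRState tail s) (l : List (Vne s)) (v : Vne s) :
    (crFireList tail head next hnext τ l).2.1 v = next^[l.count v] (τ.2.1 v) := by
  induction l generalizing τ with
  | nil => rfl
  | cons v₀ l ih =>
    rw [crFireList, ih, crFire_rotor, ← iterate_add_apply, List.count_cons_eq_ite]

theorem crFire_chips {τ : CRState tail s} {v₀ : Vne s} (hv₀ : crActive tail τ v₀) (u : Vne s) :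
    ((crFire tail head next hnext τ v₀).1 u : ℤ) =
      τ.1 u - (if u = v₀ then 1 else 0) + if head (next (τ.2.1 v₀)) = u.1 then 1 else 0 := by
  have hle : (if u = v₀ then 1 else 0) ≤ τ.1 u := by
    split_ifs with h
    · exact h ▸ hv₀
    · exact Nat.zero_le _
  simp only [crFire, eq_comm (a := u.1)]
  push_cast [Nat.cast_sub hle]
  rfl

theorem chipsSent_crFire (τ : CRState tail s) (v₀ v : Vne s) (w : V) (k : ℕ) :
    chipsSent head next (τ.2.1 v) w (k + if v = v₀ then 1 else 0) =
      chipsSent head next ((crFire tail head next hnext τ v₀).2.1 v) w k +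
        if v = v₀ then (if head (next (τ.2.1 v₀)) = w then 1 else 0) else 0 := by
  rcases eq_or_ne v v₀ with rfl | h
  · simp [crFire_rotor, chipsSent_succ, add_comm]
  · simp [crFire_rotor, h]

variable [Fintype V]

theorem crFireList_chips {τ : CRState tail s} {l : List (Vne s)}
    (hl : crLegal tail head next hnext τ l) :
    (fun w => ((crFireList tail head next hnext τ l).1 w : ℤ)) =
      (fun w => (τ.1 w : ℤ)) + netFlow head next τ.2 (fun v => l.count v) := by
  induction l generalizing τ with
  | nil => ext w; simp [crFireList, netFlow, chipsSent]
  | cons v₀ l ih =>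
    ext w
    have hsent := sum_congr rfl fun v (_ : v ∈ univ) =>
      chipsSent_crFire (head := head) (hnext := hnext) τ v₀ v w.1 (l.count v)
    rw [sum_add_distrib, sum_ite_eq', if_pos (mem_univ _)] at hsent
    rw [crFireList, congrFun (ih hl.2) w]
    simp only [Pi.add_apply, netFlow, List.count_cons_eq_ite, hsent, crFire_chips hl.1]
    push_cast
    ring

theorem RoutesAll.exists_odometer {σ : Vne s → ℕ} {ρ ρ' : RotorConfig tail s}
    (h : RoutesAll tail head next hnext σ ρ ρ') :
    ∃ c : Vne s → ℕ, (∀ v, next^[c v] (ρ.1 v) = ρ'.1 v) ∧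
      (fun v => (σ v : ℤ)) + netFlow head next ρ c = 0 := by
  obtain ⟨l, hl, hzero, rfl⟩ := h
  refine ⟨fun v => l.count v, fun v => (crFireList_rotor (σ, ρ) l v).symm, ?_⟩
  rw [← crFireList_chips hl]
  ext w
  simp [hzero]

end Firing

theorem iterate_eq_iterate_of_forall_lt {α : Type*} {f g : α → α} {x : α} {k : ℕ}
    (h : ∀ i < k, f (f^[i] x) = g (f^[i] x)) : f^[k] x = g^[k] x := by
  induction k with
  | zero => rfl
  | succ k ih =>
    rw [iterate_succ_apply', iterate_succ_apply', h k k.lt_succ_self,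
      ih fun i hi => h i (hi.trans k.lt_succ_self)]

section Acyclic

variable {V E : Type} [DecidableEq V] {s : V} {tail head : E → V}

theorem rotorSucc_of_ne (ρ : RotorConfig tail s) (v : Vne s) :
    rotorSucc tail head s ρ v.1 = head (ρ.1 v) :=
  dif_neg v.2

theorem rotorSucc_iterate_sink (ρ : RotorConfig tail s) (k : ℕ) :
    (rotorSucc tail head s ρ)^[k] s = s :=
  iterate_fixed (dif_pos rfl : rotorSucc tail head s ρ s = s) k

theorem RAcyclic.exists_head_not_mem [Finite V] {ρ : RotorConfig tail s}
    (hρ : RAcyclic tail head s ρ) {S : Finset (Vne s)} (hS : S.Nonempty) :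
    ∃ v ∈ S, head (ρ.1 v) ∉ S.map (Embedding.subtype _) := by
  by_contra! hclosed
  set f := rotorSucc tail head s ρ
  have hmaps : Set.MapsTo f (S.map (Embedding.subtype _)) (S.map (Embedding.subtype _)) := by
    intro x hx
    obtain ⟨v, hv, rfl⟩ := mem_map.1 hx
    have := hclosed v hv
    rwa [← rotorSucc_of_ne (head := head) ρ v, ← mem_coe] at this
  obtain ⟨v₀, hv₀⟩ := hS
  obtain ⟨i, j, hne, heq⟩ := Finite.exists_ne_map_eq_of_infinite (f^[·] v₀.1)
  wlog hij : i < j generalizing i j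
  · exact this j i hne.symm heq.symm (by omega)
  obtain ⟨v, -, hv⟩ := mem_map.1 (hmaps.iterate i (mem_map_of_mem _ hv₀))
  refine hρ v (j - i) (by omega) ?_
  simp only [Embedding.subtype_apply] at hv
  rw [hv, ← iterate_add_apply, Nat.sub_add_cancel hij.le]
  exact heq.symm

def CyclesHoldChips (tail head : E → V) (τ : CRState tail s) : Prop :=
  ∀ (v : Vne s) (k : ℕ), 0 < k → (rotorSucc tail head s τ.2)^[k] v.1 = v.1 →
    ∃ i < k, ∃ u : Vne s, (rotorSucc tail head s τ.2)^[i] v.1 = u.1 ∧ crActive tail τ u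

variable {next : E → E} {hnext : ∀ e, tail (next e) = tail e}

theorem rotorSucc_crFire_self (τ : CRState tail s) (v₀ : Vne s) :
    rotorSucc tail head s (crFire tail head next hnext τ v₀).2 v₀.1 = head (next (τ.2.1 v₀)) := by
  simp [rotorSucc_of_ne, crFire]

theorem rotorSucc_crFire_of_ne (τ : CRState tail s) (v₀ : Vne s) {x : V} (hx : x ≠ v₀.1) :
    rotorSucc tail head s (crFire tail head next hnext τ v₀).2 x = rotorSucc tail head s τ.2 x := by
  by_cases hxs : x = s
  · simp [rotorSucc, hxs]
  · have : (⟨x, hxs⟩ : Vne s) ≠ v₀ := fun h => hx (congrArg Subtype.val h)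
    simp [rotorSucc, hxs, crFire, this]

theorem crActive_crFire_of_ne {τ : CRState tail s} {u : Vne s} (hu : crActive tail τ u)
    {v₀ : Vne s} (hne : u ≠ v₀) : crActive tail (crFire tail head next hnext τ v₀) u := by
  simp only [crActive, crFire, if_neg hne] at hu ⊢
  omega

theorem crActive_crFire_head (τ : CRState tail s) (v₀ u : Vne s)
    (hu : u.1 = head (next (τ.2.1 v₀))) : crActive tail (crFire tail head next hnext τ v₀) u := by
  simp only [crActive, crFire, if_pos hu]
  omega

theorem cyclesHoldChips_crFire {τ : CRState tail s} (hτ : CyclesHoldChips tail head τ)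
    (v₀ : Vne s) : CyclesHoldChips tail head (crFire tail head next hnext τ v₀) := by
  intro v k hk hper
  set f' := rotorSucc tail head s (crFire tail head next hnext τ v₀).2
  by_cases hvisit : ∃ i < k, f'^[i] v.1 = v₀.1
  · obtain ⟨i, hik, hi⟩ := hvisit
    have hx : f'^[i + 1] v.1 = head (next (τ.2.1 v₀)) := by
      rw [iterate_succ_apply', hi]
      exact rotorSucc_crFire_self τ v₀
    have hxs : head (next (τ.2.1 v₀)) ≠ s := by
      intro hs
      apply v.2
      rw [← hper, ← Nat.sub_add_cancel (show i + 1 ≤ k by omega), iterate_add_apply, hx, hs,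
        rotorSucc_iterate_sink]
    exact ⟨(i + 1) % k, Nat.mod_lt _ hk, ⟨_, hxs⟩,
      (IsPeriodicPt.iterate_mod_apply hper _).trans hx, crActive_crFire_head τ v₀ _ rfl⟩
  · push Not at hvisit
    have hagree : ∀ i ≤ k, f'^[i] v.1 = (rotorSucc tail head s τ.2)^[i] v.1 := fun i hi =>
      iterate_eq_iterate_of_forall_lt fun j hj => rotorSucc_crFire_of_ne τ v₀ (hvisit j (by omega))
    obtain ⟨i, hik, u, hu, hact⟩ := hτ v k hk ((hagree k le_rfl).symm.trans hper)
    have hne : u ≠ v₀ := fun h => hvisit i hik (by rw [hagree i hik.le, hu, h])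
    exact ⟨i, hik, u, (hagree i hik.le).trans hu, crActive_crFire_of_ne hact hne⟩

theorem cyclesHoldChips_crFireList {τ : CRState tail s} (hτ : CyclesHoldChips tail head τ)
    (l : List (Vne s)) : CyclesHoldChips tail head (crFireList tail head next hnext τ l) := by
  induction l generalizing τ with
  | nil => exact hτ
  | cons v₀ l ih => exact ih (cyclesHoldChips_crFire hτ v₀)

theorem RAcyclic.of_routesAll {σ : Vne s → ℕ} {ρ ρ' : RotorConfig tail s}
    (hρ : RAcyclic tail head s ρ) (h : RoutesAll tail head next hnext σ ρ ρ') :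
    RAcyclic tail head s ρ' := by
  obtain ⟨l, -, hzero, rfl⟩ := h
  have hinit : CyclesHoldChips tail head ((σ, ρ) : CRState tail s) :=
    fun v k hk hper => absurd hper (hρ v k hk)
  intro v k hk hper
  obtain ⟨-, -, u, -, hu⟩ := cyclesHoldChips_crFireList hinit l v k hk hper
  exact absurd (hzero u) (Nat.one_le_iff_ne_zero.1 hu)

end Acyclic

theorem sum_range_sub_sum_range_le {f : ℕ → ℤ} (hf : ∀ j, f j ≤ 1) {a b : ℕ} (hba : b ≤ a) :
    ∑ j ∈ range a, f j - ∑ j ∈ range b, f j ≤ a - b := by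
  rw [← sum_Ico_eq_sub _ hba]
  calc ∑ j ∈ Ico b a, f j ≤ ∑ _j ∈ Ico b a, 1 := sum_le_sum fun j _ => hf j
    _ = a - b := by simp [Nat.cast_sub hba]

section Comparison

variable {V E : Type} [DecidableEq V] (head : E → V) (next : E → E)

theorem sum_chipsSent_sub_le (T : Finset V) (e : E) (a b : ℕ) :
    ∑ w ∈ T, (chipsSent head next e w a - chipsSent head next e w b) ≤
      if b < a then (a - b - 1 : ℤ) + (if head (next^[a] e) ∈ T then 1 else 0) else 0 := by
  rw [sum_sub_distrib, sum_chipsSent, sum_chipsSent]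
  by_cases hba : b < a
  · rw [if_pos hba]
    obtain ⟨m, rfl⟩ := Nat.exists_eq_add_of_lt hba
    have := sum_range_sub_sum_range_le (f := fun j => if head (next^[j + 1] e) ∈ T then 1 else 0)
      (fun j => by split_ifs <;> simp) (show b ≤ b + m by omega)
    rw [sum_range_succ]
    push_cast at this ⊢
    linarith
  · rw [if_neg hba]
    exact sub_nonpos.2 (sum_le_sum_of_subset_of_nonneg (range_subset_range.2 (not_lt.1 hba))
      fun j _ _ => by split_ifs <;> simp)

variable [Fintype V] {s : V} {tail : E → V} {head next}

theorem le_of_netFlow_eq {ρ ρf : RotorConfig tail s} (hρf : RAcyclic tail head s ρf)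
    {A B : Vne s → ℕ} (hA : ∀ v, next^[A v] (ρ.1 v) = ρf.1 v)
    (hAB : netFlow head next ρ A = netFlow head next ρ B) : A ≤ B := by
  by_contra hnot
  set S := univ.filter fun v => B v < A v
  have hS : S.Nonempty := by
    obtain ⟨v, hv⟩ := not_forall.1 hnot
    exact ⟨v, mem_filter.2 ⟨mem_univ _, not_le.1 hv⟩⟩
  set T := S.map (Embedding.subtype _)
  obtain ⟨v₀, hv₀S, hv₀T⟩ := hρf.exists_head_not_mem hS
  have hsent : ∑ w ∈ S, ((A w : ℤ) - B w) = ∑ v, ∑ w ∈ T,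
      (chipsSent head next (ρ.1 v) w (A v) - chipsSent head next (ρ.1 v) w (B v)) := by
    rw [sum_comm, sum_map]
    refine sum_congr rfl fun w _ => ?_
    have := congrFun hAB w
    simp only [netFlow] at this
    rw [Embedding.subtype_apply, sum_sub_distrib]
    linarith
  have hbound : ∑ v, ∑ w ∈ T,
      (chipsSent head next (ρ.1 v) w (A v) - chipsSent head next (ρ.1 v) w (B v)) ≤
        ∑ v ∈ S, ((A v : ℤ) - B v - 1 + if head (ρf.1 v) ∈ T then 1 else 0) := by
    rw [sum_filter]
    exact sum_le_sum fun v _ => hA v ▸ sum_chipsSent_sub_le head next T (ρ.1 v) (A v) (B v)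
  have hlt : ∑ v ∈ S, ((A v : ℤ) - B v - 1 + if head (ρf.1 v) ∈ T then 1 else 0) <
      ∑ v ∈ S, ((A v : ℤ) - B v) :=
    sum_lt_sum (fun v _ => by split_ifs <;> linarith) ⟨v₀, hv₀S, by rw [if_neg hv₀T]; linarith⟩
  linarith

end Comparison

theorem equivalent_configurations_act_equally_general
    {V E : Type} [Fintype V] [DecidableEq V] [Fintype E]
    (tail head : E → V) (next : E → E)
    (hnext : ∀ e, tail (next e) = tail e)
    (hcyc : ∀ e e' : E, tail e = tail e' → ∃ k, next^[k] e = e')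
    (s : V)
    (ρ : RotorConfig tail s) (hρ : RAcyclic tail head s ρ)
    (σ₁ σ₂ : Vne s → ℕ)
    (hequiv : ((fun v => (σ₁ v : ℤ)) - fun v => (σ₂ v : ℤ)) ∈ rowSpan tail head s)
    (ρ₁' ρ₂' : RotorConfig tail s)
    (h₁ : RoutesAll tail head next hnext σ₁ ρ ρ₁')
    (h₂ : RoutesAll tail head next hnext σ₂ ρ ρ₂') :
    ρ₁' = ρ₂' := by
  obtain ⟨c₁, hrot₁, hflow₁⟩ := h₁.exists_odometer
  obtain ⟨c₂, hrot₂, hflow₂⟩ := h₂.exists_odometer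
  obtain ⟨n, hn⟩ := (mem_rowSpan_iff tail head s _).1 hequiv
  set A := fun v : Vne s => c₁ v + (-n v).toNat * outdeg tail v.1
  set B := fun v : Vne s => c₂ v + (n v).toNat * outdeg tail v.1
  have hA (v : Vne s) : next^[A v] (ρ.1 v) = ρ₁'.1 v :=
    (ρ.2 v ▸ iterate_add_mul_outdeg hnext hcyc (ρ.1 v) (c₁ v) _).trans (hrot₁ v)
  have hB (v : Vne s) : next^[B v] (ρ.1 v) = ρ₂'.1 v :=
    (ρ.2 v ▸ iterate_add_mul_outdeg hnext hcyc (ρ.1 v) (c₂ v) _).trans (hrot₂ v)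
  have hsplit : (fun v => ((n v).toNat : ℤ)) ᵥ* reducedLaplacian tail head s -
      (fun v => ((-n v).toNat : ℤ)) ᵥ* reducedLaplacian tail head s =
        n ᵥ* reducedLaplacian tail head s := by
    rw [← Matrix.sub_vecMul]
    exact congrArg (· ᵥ* _) (funext fun v => Int.toNat_sub_toNat_neg (n v))
  have hAB : netFlow head next ρ A = netFlow head next ρ B := by
    rw [netFlow_add_mul_outdeg head hnext hcyc, netFlow_add_mul_outdeg head hnext hcyc]
    linear_combination hflow₁ - hflow₂ + hn + hsplit
  have hle₁ := le_of_netFlow_eq (hρ.of_routesAll h₁) hA hAB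
  have hle₂ := le_of_netFlow_eq (hρ.of_routesAll h₂) hB hAB.symm
  ext v : 2
  rw [← hA, ← hB, le_antisymm hle₁ hle₂]

/-- **Equivalent chip configurations act identically on acyclic rotor configurations.**
Let `G` be a digraph with a global sink and `ρ` an acyclic rotor configuration.  If
the chip configurations `σ₁` and `σ₂` are equivalent modulo the integer row span of
the reduced Laplacian, then `σ₁(ρ) = σ₂(ρ)`. -/
theorem equivalent_configurations_act_equally
    {V E : Type} [Fintype V] [DecidableEq V] [Fintype E]
    (tail head : E → V) (next : E → E)
    (hnext : ∀ e, tail (next e) = tail e)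
    (hcyc : ∀ e e' : E, tail e = tail e' → ∃ k, next^[k] e = e')
    (s : V) (hs : outdeg tail s = 0)
    (hglobal : ∀ v : V,
      Relation.ReflTransGen (fun a b => ∃ e, tail e = a ∧ head e = b) v s)
    (ρ : RotorConfig tail s) (hρ : RAcyclic tail head s ρ)
    (σ₁ σ₂ : Vne s → ℕ)
    (hequiv : ((fun v => (σ₁ v : ℤ)) - fun v => (σ₂ v : ℤ)) ∈ rowSpan tail head s)
    (ρ₁' ρ₂' : RotorConfig tail s)
    (h₁ : RoutesAll tail head next hnext σ₁ ρ ρ₁')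
    (h₂ : RoutesAll tail head next hnext σ₂ ρ ρ₂') :
    ρ₁' = ρ₂' :=
  equivalent_configurations_act_equally_general tail head next hnext hcyc s ρ hρ σ₁ σ₂ hequiv ρ₁'
    ρ₂' h₁ h₂
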